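/- Let R : [0,∞) → [0,∞) be a convex nonincreasing function, let R_K ≥ 0, D_E ≥ 0, and let t ≤ l be positive integers. Then for all D_1, …, D_t ≥ 0 with ∑_{i=1}^t D_i ≤ l·D_E, it holds that ∑_{i=1}^t [R_K − R(D_i)]^+ ≤ t · sup{ λ(R_K − R(D)) : 0 ≤ λ ≤ 1, D ≥ 0, λD ≤ (l/t)·D_E }. Equivalently, t·R_K − ∑_{i=1}^t [R_K − R(D_i)]^+ ≥ t · inf{ (1−λ)R_K + λR(D) : 0 ≤ λ ≤ 1, D ≥ 0, λD ≤ (l/t)·D_E }. -/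

import Mathlib

/-!
Only the indices `S = {i | R (D i) < R_K}` contribute to the sum. Time-share with
`λ = |S| / t` at the average `D̄` of the `D i` over `S`: by Jensen,
`∑_{i ∈ S} (R_K - R (D i)) ≤ |S| (R_K - R D̄) = t λ (R_K - R D̄)`, and
`λ D̄ = (∑_{i ∈ S} D i) / t ≤ l D_E / t`, so `(λ, D̄)` is admissible in both the
supremum and the infimum.
-/

open Finset Set

theorem ConvexOn.map_finset_average_le {ι E : Type*} [AddCommGroup E] [Module ℝ E] {s : Set E}
    {f : E → ℝ} (hf : ConvexOn ℝ s f) {S : Finset ι} (hS : S.Nonempty) {x : ι → E}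
    (hx : ∀ i ∈ S, x i ∈ s) :
    f ((#S : ℝ)⁻¹ • ∑ i ∈ S, x i) ≤ (#S : ℝ)⁻¹ * ∑ i ∈ S, f (x i) := by
  have hcard : (#S : ℝ) ≠ 0 := by exact_mod_cast hS.card_ne_zero
  simpa [Finset.smul_sum, Finset.mul_sum] using
    hf.map_sum_le (w := fun _ => (#S : ℝ)⁻¹) (fun _ _ => by positivity)
      (by simp [hcard]) hx

theorem Finset.sum_max_zero_eq_sum_filter_pos {ι : Type*} (S : Finset ι) (f : ι → ℝ) :
    ∑ i ∈ S, max (f i) 0 = ∑ i ∈ S with 0 < f i, f i := by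
  rw [Finset.sum_filter]
  refine Finset.sum_congr rfl fun i _ => ?_
  split_ifs with h
  · exact max_eq_left h.le
  · exact max_eq_right (not_lt.mp h)

theorem ConvexOn.exists_timesharing {ι : Type*} [Fintype ι] {R : ℝ → ℝ}
    (hR : ConvexOn ℝ (Ici 0) R) (c : ℝ) {D : ι → ℝ} (hD : ∀ i, 0 ≤ D i) :
    ∃ lam Dv : ℝ, 0 ≤ lam ∧ lam ≤ 1 ∧ 0 ≤ Dv ∧ lam * Dv ≤ (∑ i, D i) / Fintype.card ι ∧
      ∑ i, max (c - R (D i)) 0 ≤ Fintype.card ι * (lam * (c - R Dv)) := by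
  rw [sum_max_zero_eq_sum_filter_pos]
  set S := univ.filter fun i => 0 < c - R (D i)
  have hsum_nonneg : 0 ≤ ∑ i, D i := sum_nonneg fun i _ => hD i
  rcases S.eq_empty_or_nonempty with hS | hS
  · refine ⟨0, 0, le_rfl, zero_le_one, le_rfl, ?_, ?_⟩
    · rw [zero_mul]
      exact div_nonneg hsum_nonneg (Nat.cast_nonneg _)
    · simp [hS]
  have hS0 : (#S : ℝ) ≠ 0 := by exact_mod_cast hS.card_ne_zero
  set Dv := (#S : ℝ)⁻¹ * ∑ i ∈ S, D i
  have hJensen : R Dv ≤ (#S : ℝ)⁻¹ * ∑ i ∈ S, R (D i) :=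
    hR.map_finset_average_le hS fun i _ => hD i
  have hsub : ∑ i ∈ S, D i ≤ ∑ i, D i :=
    sum_le_sum_of_subset_of_nonneg (subset_univ S) fun i _ _ => hD i
  refine ⟨#S / Fintype.card ι, Dv, by positivity, ?_, ?_, ?_, ?_⟩
  · exact div_le_one_of_le₀ (by exact_mod_cast card_le_univ S) (Nat.cast_nonneg _)
  · exact mul_nonneg (by positivity) (sum_nonneg fun i _ => hD i)
  · rw [div_mul_eq_mul_div, mul_inv_cancel_left₀ hS0]
    gcongr
  · have hcard : (Fintype.card ι : ℝ) ≠ 0 := by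
      exact_mod_cast (Fintype.card_pos_iff.mpr ⟨hS.choose⟩).ne'
    calc ∑ i ∈ S, (c - R (D i)) = #S * c - #S * ((#S : ℝ)⁻¹ * ∑ i ∈ S, R (D i)) := by
          rw [sum_sub_distrib, sum_const, nsmul_eq_mul, mul_inv_cancel_left₀ hS0]
      _ ≤ #S * c - #S * R Dv := by gcongr
      _ = Fintype.card ι * (#S / Fintype.card ι * (c - R Dv)) := by
          field_simp

theorem timesharing_bound_general
    (R : ℝ → ℝ)
    (hconv : ConvexOn ℝ (Set.Ici (0 : ℝ)) R)
    (hnonneg : ∀ x ∈ Set.Ici (0 : ℝ), 0 ≤ R x)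
    (RK DE : ℝ) (hRK : 0 ≤ RK)
    (t l : ℕ)
    (D : Fin t → ℝ) (hD : ∀ i, 0 ≤ D i)
    (hsum : ∑ i, D i ≤ (l : ℝ) * DE) :
    (∑ i, max (RK - R (D i)) 0
        ≤ (t : ℝ) * sSup {x : ℝ | ∃ lam Dv : ℝ, 0 ≤ lam ∧ lam ≤ 1 ∧ 0 ≤ Dv ∧
            lam * Dv ≤ ((l : ℝ) / (t : ℝ)) * DE ∧ x = lam * (RK - R Dv)}) ∧
    ((t : ℝ) * sInf {x : ℝ | ∃ lam Dv : ℝ, 0 ≤ lam ∧ lam ≤ 1 ∧ 0 ≤ Dv ∧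
            lam * Dv ≤ ((l : ℝ) / (t : ℝ)) * DE ∧ x = (1 - lam) * RK + lam * R Dv}
        ≤ (t : ℝ) * RK - ∑ i, max (RK - R (D i)) 0) := by
  obtain ⟨lam, Dv, hlam0, hlam1, hDv, hfeas, hbound⟩ := hconv.exists_timesharing RK hD
  rw [Fintype.card_fin] at hfeas hbound
  have hfeas' : lam * Dv ≤ (l / t : ℝ) * DE := by
    rw [div_mul_eq_mul_div]
    exact hfeas.trans (by gcongr)
  constructor
  · refine hbound.trans <| mul_le_mul_of_nonneg_left
      (le_csSup ⟨RK, ?_⟩ ⟨lam, Dv, hlam0, hlam1, hDv, hfeas', rfl⟩) t.cast_nonneg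
    rintro x ⟨a, d, ha0, ha1, hd, -, rfl⟩
    nlinarith [hnonneg d hd]
  · refine le_trans (b := t * ((1 - lam) * RK + lam * R Dv)) ?_ (by linarith)
    refine mul_le_mul_of_nonneg_left
      (csInf_le ⟨0, ?_⟩ ⟨lam, Dv, hlam0, hlam1, hDv, hfeas', rfl⟩) t.cast_nonneg
    rintro x ⟨a, d, ha0, ha1, hd, -, rfl⟩
    nlinarith [hnonneg d hd]

theorem timesharing_bound
    (R : ℝ → ℝ)
    (hconv : ConvexOn ℝ (Set.Ici (0 : ℝ)) R)
    (hmono : AntitoneOn R (Set.Ici (0 : ℝ)))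
    (hnonneg : ∀ x ∈ Set.Ici (0 : ℝ), 0 ≤ R x)
    (RK DE : ℝ) (hRK : 0 ≤ RK) (hDE : 0 ≤ DE)
    (t l : ℕ) (ht : 0 < t) (htl : t ≤ l)
    (D : Fin t → ℝ) (hD : ∀ i, 0 ≤ D i)
    (hsum : ∑ i, D i ≤ (l : ℝ) * DE) :
    (∑ i, max (RK - R (D i)) 0
        ≤ (t : ℝ) * sSup {x : ℝ | ∃ lam Dv : ℝ, 0 ≤ lam ∧ lam ≤ 1 ∧ 0 ≤ Dv ∧
            lam * Dv ≤ ((l : ℝ) / (t : ℝ)) * DE ∧ x = lam * (RK - R Dv)}) ∧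
    ((t : ℝ) * sInf {x : ℝ | ∃ lam Dv : ℝ, 0 ≤ lam ∧ lam ≤ 1 ∧ 0 ≤ Dv ∧
            lam * Dv ≤ ((l : ℝ) / (t : ℝ)) * DE ∧ x = (1 - lam) * RK + lam * R Dv}
        ≤ (t : ℝ) * RK - ∑ i, max (RK - R (D i)) 0) :=
  timesharing_bound_general R hconv hnonneg RK DE hRK t l D hD hsum
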